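/- arXiv:1510.05049 — 3 statements merged into one kernel-verified Lean document; each statement's English description precedes it below -/
import Mathlib

section
/- Let f : ℝ² → ℝ² be a homeomorphism commuting with the integer translations (a lift of a torus homeomorphism homotopic to the identity), and let v ∈ ℝ² be nonzero. If the deviation of f in direction v is bounded, i.e. there is M > 0 such that |⟨(fⁿ(x) − x) − (fⁿ(y) − y), v⟩| ≤ M for all x, y ∈ ℝ² and all n ∈ ℤ, then there exists a ∈ ℝ such that the orthogonal projection onto v of the rotation set of f equals the single point {a}. Consequently the rotation set is contained in the line {t v^⊥ + a v/‖v‖ : t ∈ ℝ}. -/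
open Filter Topology MeasureTheory

noncomputable section

/-- The plane ℝ². -/
abbrev V2 : Type := ℝ × ℝ

/-- Euclidean dot product on ℝ². -/
def dot (x y : V2) : ℝ := x.1 * y.1 + x.2 * y.2

/-- Euclidean norm on ℝ². -/
def nrm (x : V2) : ℝ := Real.sqrt (dot x x)

/-- v^⊥ = (−v₂, v₁). -/
def perp (v : V2) : V2 := (-v.2, v.1)

/-- Inclusion of ℤ² into ℝ². -/
def intVec (u : ℤ × ℤ) : V2 := ((u.1 : ℝ), (u.2 : ℝ))

/-- `f` is a lift of a torus map: it commutes with all integer translations. -/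
def IsLift (f : V2 → V2) : Prop := ∀ (z : V2) (u : ℤ × ℤ), f (z + intVec u) = f z + intVec u

/-- The Misiurewicz–Ziemian rotation set of `f`. -/
def RotSet (f : V2 → V2) : Set V2 :=
  {v | ∃ (n : ℕ → ℕ) (x : ℕ → V2), Tendsto n atTop atTop ∧
    Tendsto (fun i => ((n i : ℝ))⁻¹ • (f^[n i] (x i) - x i)) atTop (𝓝 v)}

/-!
Bounded deviation in direction `v` makes `g n = ⟨fⁿ(0), v⟩` quasi-additive,
`|g (m + n) - g m - g n| ≤ M`, so `g n + M` is subadditive and, by Fekete's lemma, `g n / n`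
converges to some `L`. Bounded deviation also says that `⟨fⁿ(x) - x, v⟩` stays within `M` of `g n`
for every `x`, so every rotation vector `w` has `⟨w, v⟩ = L`. The rotation set is nonempty, hence
its projection onto `v` is the single point `L / ‖v‖`.
-/

lemma dot_sub_left (x y w : V2) : dot (x - y) w = dot x w - dot y w := by
  simp only [dot, Prod.fst_sub, Prod.snd_sub]; ring

lemma dot_smul_left (c : ℝ) (x w : V2) : dot (c • x) w = c * dot x w := by
  simp only [dot, Prod.smul_fst, Prod.smul_snd, smul_eq_mul]; ring

lemma continuous_dot_left (v : V2) : Continuous fun p : V2 => dot p v := by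
  unfold dot; fun_prop

lemma dot_self_pos {v : V2} (hv : v ≠ 0) : 0 < dot v v := by
  have hv' : v.1 ≠ 0 ∨ v.2 ≠ 0 := by
    contrapose! hv
    exact Prod.ext hv.1 hv.2
  unfold dot
  rcases hv' with h | h
  · nlinarith [mul_self_pos.2 h, mul_self_nonneg v.2]
  · nlinarith [mul_self_pos.2 h, mul_self_nonneg v.1]

lemma nrm_mul_self (v : V2) : nrm v * nrm v = dot v v :=
  Real.mul_self_sqrt (add_nonneg (mul_self_nonneg _) (mul_self_nonneg _))

lemma dot_perp_div_smul_perp_add_dot_div_smul {v : V2} (hv : v ≠ 0) (w : V2) :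
    (dot w (perp v) / dot v v) • perp v + (dot w v / dot v v) • v = w := by
  have hD : dot v v ≠ 0 := (dot_self_pos hv).ne'
  refine Prod.ext ?_ ?_ <;>
    · simp only [Prod.fst_add, Prod.snd_add, Prod.smul_fst, Prod.smul_snd, smul_eq_mul]
      rw [div_mul_eq_mul_div, div_mul_eq_mul_div, ← add_div, div_eq_iff hD]
      simp only [dot, perp]
      ring

lemma exists_tendsto_div_of_abs_add_sub_le {g : ℕ → ℝ} {M : ℝ}
    (hg : ∀ m n, |g (m + n) - g m - g n| ≤ M) :
    ∃ L, Tendsto (fun n => g n / n) atTop (𝓝 L) := by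
  have hsub : Subadditive fun n => g n + M := fun m n => by
    linarith [(abs_le.1 (hg m n)).2]
  have hstep : ∀ n, g n + g 1 - M ≤ g (n + 1) := fun n => by
    linarith [(abs_le.1 (hg n 1)).1]
  have hg0 : |g 0| ≤ M := by simpa using hg 0 0
  have hlower : ∀ n : ℕ, n * (g 1 - M) - M ≤ g n := by
    intro n
    induction n with
    | zero => simpa using neg_le_of_abs_le hg0
    | succ n ih => push_cast; linarith [hstep n]
  have hbdd : BddBelow (Set.range fun n => (g n + M) / n) := by
    refine ⟨min (g 1 - M) 0, ?_⟩
    rintro _ ⟨n, rfl⟩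
    rcases Nat.eq_zero_or_pos n with rfl | hn
    · simp
    · have hn' : (0 : ℝ) < n := Nat.cast_pos.2 hn
      rw [le_div_iff₀ hn']
      nlinarith [hlower n, min_le_left (g 1 - M) 0]
  refine ⟨hsub.lim, ?_⟩
  simpa [add_div] using (hsub.tendsto_lim hbdd).sub (tendsto_const_div_atTop_nhds_zero_nat M)

lemma exists_forall_mem_rotSet_dot_eq {f : V2 → V2} {v : V2} {M : ℝ}
    (hdev : ∀ (n : ℕ) (x y : V2), |dot ((f^[n] x - x) - (f^[n] y - y)) v| ≤ M) :
    ∃ L, ∀ w ∈ RotSet f, dot w v = L := by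
  set g : ℕ → ℝ := fun n => dot (f^[n] 0) v
  have hdev₀ : ∀ n x, |dot (f^[n] x - x) v - g n| ≤ M := fun n x => by
    simpa only [g, dot_sub_left, sub_zero] using hdev n x 0
  obtain ⟨L, hL⟩ : ∃ L, Tendsto (fun n => g n / n) atTop (𝓝 L) := by
    refine exists_tendsto_div_of_abs_add_sub_le (M := M) fun m n => ?_
    have h := hdev₀ n (f^[m] 0)
    rw [dot_sub_left, ← Function.iterate_add_apply, add_comm n m] at h
    exact h
  refine ⟨L, fun w ⟨n, x, hn, hx⟩ => ?_⟩
  have hclose : Tendsto (fun i => dist (g (n i) / n i)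
      (dot (((n i : ℝ))⁻¹ • (f^[n i] (x i) - x i)) v)) atTop (𝓝 0) := by
    refine squeeze_zero' (Eventually.of_forall fun _ => dist_nonneg) ?_
      ((tendsto_const_div_atTop_nhds_zero_nat M).comp hn)
    filter_upwards [hn.eventually_gt_atTop 0] with i hi
    have hi' : (0 : ℝ) < n i := Nat.cast_pos.2 hi
    rw [Real.dist_eq, dot_smul_left, Function.comp_apply, inv_mul_eq_div, ← sub_div, abs_div,
      abs_of_pos hi', abs_sub_comm]
    exact div_le_div_of_nonneg_right (hdev₀ _ _) hi'.le
  exact tendsto_nhds_unique (((continuous_dot_left v).tendsto w).comp hx)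
    ((hL.comp hn).congr_dist hclose)

lemma IsLift.exists_norm_sub_le {f : V2 → V2} (hf : Continuous f) (hlift : IsLift f) :
    ∃ C, ∀ z, ‖f z - z‖ ≤ C := by
  obtain ⟨C, hC⟩ := (isCompact_Icc (a := (0 : V2)) (b := 1)).exists_bound_of_continuousOn
    (hf.sub continuous_id).continuousOn
  refine ⟨C, fun z => ?_⟩
  set k : ℤ × ℤ := (⌊z.1⌋, ⌊z.2⌋)
  have hmem : z - intVec k ∈ Set.Icc (0 : V2) 1 := by
    simp only [k, intVec, Set.mem_Icc, Prod.le_def, Prod.fst_sub, Prod.snd_sub, Prod.fst_zero,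
      Prod.snd_zero, Prod.fst_one, Prod.snd_one, Int.self_sub_floor]
    exact ⟨⟨Int.fract_nonneg _, Int.fract_nonneg _⟩, (Int.fract_lt_one _).le, (Int.fract_lt_one _).le⟩
  have hperiodic : f z - z = f (z - intVec k) - (z - intVec k) := by
    conv_lhs => rw [← sub_add_cancel z (intVec k), hlift]
    abel
  exact hperiodic ▸ hC _ hmem

lemma norm_iterate_sub_le {E : Type*} [SeminormedAddCommGroup E] {f : E → E} {C : ℝ}
    (h : ∀ z, ‖f z - z‖ ≤ C) (n : ℕ) (z : E) : ‖f^[n] z - z‖ ≤ n * C := by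
  induction n with
  | zero => simp
  | succ n ih =>
    calc ‖f^[n + 1] z - z‖ = ‖(f (f^[n] z) - f^[n] z) + (f^[n] z - z)‖ := by
          rw [Function.iterate_succ_apply', sub_add_sub_cancel]
      _ ≤ C + n * C := (norm_add_le _ _).trans (add_le_add (h _) ih)
      _ = (n + 1 : ℕ) * C := by push_cast; ring

lemma rotSet_nonempty {f : V2 → V2} (hf : Continuous f) (hlift : IsLift f) :
    (RotSet f).Nonempty := by
  obtain ⟨C, hC⟩ := hlift.exists_norm_sub_le hf
  have hC₀ : 0 ≤ C := (norm_nonneg _).trans (hC 0)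
  have hmem : ∀ n : ℕ, ((n : ℝ))⁻¹ • (f^[n] 0 - 0) ∈ Metric.closedBall (0 : V2) C := by
    intro n
    rw [mem_closedBall_zero_iff, norm_smul, norm_inv, Real.norm_natCast]
    rcases Nat.eq_zero_or_pos n with rfl | hn
    · simpa using hC₀
    · exact (inv_mul_le_iff₀ (Nat.cast_pos.2 hn)).2 (norm_iterate_sub_le hC n 0)
  obtain ⟨w, -, φ, hφ, hw⟩ := (isCompact_closedBall (0 : V2) C).tendsto_subseq hmem
  exact ⟨w, φ, fun _ => 0, hφ.tendsto_atTop, hw⟩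

theorem stmt0_general (f : Equiv.Perm V2) (hf : Continuous ⇑f)
    (hlift : IsLift ⇑f) (v : V2) (hv : v ≠ 0)
    (M : ℝ)
    (hdev : ∀ (n : ℤ) (x y : V2), |dot (((f ^ n) x - x) - ((f ^ n) y - y)) v| ≤ M) :
    ∃ a : ℝ, (fun p => dot p v / nrm v) '' RotSet ⇑f = {a} ∧
      RotSet ⇑f ⊆ {w | ∃ t : ℝ, w = t • perp v + (a / nrm v) • v} := by
  obtain ⟨L, hL⟩ := exists_forall_mem_rotSet_dot_eq (f := ⇑f) (v := v) (M := M) fun n x y => by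
    simpa only [Equiv.Perm.iterate_eq_pow, zpow_natCast] using hdev n x y
  refine ⟨L / nrm v, ((rotSet_nonempty hf hlift).image _).subset_singleton_iff.1 ?_, ?_⟩
  · rintro _ ⟨w, hw, rfl⟩
    simp only [hL w hw, Set.mem_singleton_iff]
  · intro w hw
    refine ⟨dot w (perp v) / dot v v, ?_⟩
    rw [div_div, nrm_mul_self, ← hL w hw]
    exact (dot_perp_div_smul_perp_add_dot_div_smul hv w).symm

/-- If the deviation of a lift f in direction v is bounded, the orthogonal projection
of the rotation set onto v is a single point {a}, and the rotation set lies on the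
line of points t • v^⊥ + (a/‖v‖) • v. -/
theorem stmt0 (f : Equiv.Perm V2) (hf : Continuous ⇑f) (hf' : Continuous ⇑f.symm)
    (hlift : IsLift ⇑f) (v : V2) (hv : v ≠ 0)
    (M : ℝ) (hM : 0 < M)
    (hdev : ∀ (n : ℤ) (x y : V2), |dot (((f ^ n) x - x) - ((f ^ n) y - y)) v| ≤ M) :
    ∃ a : ℝ, (fun p => dot p v / nrm v) '' RotSet ⇑f = {a} ∧
      RotSet ⇑f ⊆ {w | ∃ t : ℝ, w = t • perp v + (a / nrm v) • v} :=
  stmt0_general f hf hlift v hv M hdev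
end
end

section
/- (Atkinson) Let (X, ℬ, μ) be a probability space, T : X → X an ergodic measure-preserving automorphism, and φ : X → ℝ integrable with ∫ φ dμ = 0. Then for every B ∈ ℬ and every ε > 0, μ(⋃_{n ∈ ℕ} (B ∩ T^{−n}(B) ∩ {x : |∑_{i=0}^{n−1} φ(Tⁱ(x))| < ε})) = μ(B). -/
open Filter Topology MeasureTheory

noncomputable section

/-!
Let `E` be the set of points of `B` none of whose returns to `B` has a Birkhoff sum in `(-ε, ε)`.
If an orbit visits `E` at times `k < m`, then `S_m - S_k = S_{m-k} ∘ T^k`, so `|S_m - S_k| ≥ ε`: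
along an orbit, the Birkhoff sums at the visit times to `E` are `ε`-separated. Since `∫ φ = 0`,
ergodicity and Hopf's maximal inequality give `S_n = o(n)` almost everywhere, so up to time `N`
these sums lie in an interval of length `o(N)` and the orbit visits `E` only `o(N)` times.
As `T` preserves `μ`, the mean visit frequency to `E` is `μ E`, hence `μ E = 0`.
-/

open Finset

section BirkhoffIntegral

variable {X E : Type*} [MeasurableSpace X] {μ : Measure X} {f : X → X}
  [NormedAddCommGroup E]

theorem integrable_birkhoffSum {g : X → E} (hf : MeasurePreserving f μ μ) (hg : Integrable g μ)
    (n : ℕ) : Integrable (birkhoffSum f g n) μ :=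
  integrable_finsetSum _ fun i _ => (hf.iterate i).integrable_comp_of_integrable hg

variable [NormedSpace ℝ E]

theorem MeasureTheory.MeasurePreserving.integral_comp_of_aestronglyMeasurable {Y : Type*}
    [MeasurableSpace Y] {ν : Measure Y} {f : X → Y} {g : Y → E} (hf : MeasurePreserving f μ ν)
    (hg : AEStronglyMeasurable g ν) : ∫ x, g (f x) ∂μ = ∫ y, g y ∂ν := by
  rw [← integral_map hf.aemeasurable (hf.map_eq ▸ hg), hf.map_eq]

theorem integral_birkhoffSum {g : X → E} (hf : MeasurePreserving f μ μ) (hg : Integrable g μ)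
    (n : ℕ) : ∫ x, birkhoffSum f g n x ∂μ = n • ∫ x, g x ∂μ := by
  unfold birkhoffSum
  rw [integral_finsetSum (f := fun i x => g (f^[i] x)) _ fun i _ =>
    (hf.iterate i).integrable_comp_of_integrable hg]
  simp [(hf.iterate _).integral_comp_of_aestronglyMeasurable hg.aestronglyMeasurable]

theorem integral_birkhoffAverage {g : X → E} (hf : MeasurePreserving f μ μ)
    (hg : Integrable g μ) {n : ℕ} (hn : n ≠ 0) :
    ∫ x, birkhoffAverage ℝ f g n x ∂μ = ∫ x, g x ∂μ := by
  simp only [birkhoffAverage, integral_smul, integral_birkhoffSum hf hg,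
    ← Nat.cast_smul_eq_nsmul ℝ]
  exact inv_smul_smul₀ (Nat.cast_ne_zero.2 hn) _

end BirkhoffIntegral

section Hopf

variable {X : Type*} {f : X → X} {ψ : X → ℝ}

/-- `maxBirkhoffSum f ψ N x = max_{0 ≤ n ≤ N} birkhoffSum f ψ n x`, defined by the recursion that
drives Hopf's argument. -/
def maxBirkhoffSum (f : X → X) (ψ : X → ℝ) : ℕ → X → ℝ
  | 0 => 0
  | N + 1 => fun x => max 0 (ψ x + maxBirkhoffSum f ψ N (f x))

theorem maxBirkhoffSum_zero : maxBirkhoffSum f ψ 0 = 0 := rfl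

theorem maxBirkhoffSum_succ (N : ℕ) (x : X) :
    maxBirkhoffSum f ψ (N + 1) x = max 0 (ψ x + maxBirkhoffSum f ψ N (f x)) := rfl

theorem maxBirkhoffSum_nonneg (N : ℕ) (x : X) : 0 ≤ maxBirkhoffSum f ψ N x := by
  cases N with
  | zero => exact le_rfl
  | succ N => exact le_max_left _ _

theorem maxBirkhoffSum_succ_of_pos {N : ℕ} {x : X} (h : 0 < maxBirkhoffSum f ψ (N + 1) x) :
    maxBirkhoffSum f ψ (N + 1) x = ψ x + maxBirkhoffSum f ψ N (f x) := by
  rw [maxBirkhoffSum_succ] at h ⊢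
  exact max_eq_right ((lt_max_iff.1 h).resolve_left (lt_irrefl 0)).le

theorem birkhoffSum_le_maxBirkhoffSum {n N : ℕ} (hn : n ≤ N) (x : X) :
    birkhoffSum f ψ n x ≤ maxBirkhoffSum f ψ N x := by
  induction N generalizing n x with
  | zero => simp [Nat.le_zero.1 hn, maxBirkhoffSum_zero]
  | succ N ih =>
    cases n with
    | zero => simpa using maxBirkhoffSum_nonneg (N + 1) x
    | succ n =>
      rw [birkhoffSum_succ', maxBirkhoffSum_succ]
      exact le_max_of_le_right (add_le_add le_rfl (ih (n := n) (by omega) (f x)))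

theorem exists_maxBirkhoffSum_eq_birkhoffSum (N : ℕ) (x : X) :
    ∃ n ≤ N, maxBirkhoffSum f ψ N x = birkhoffSum f ψ n x := by
  induction N generalizing x with
  | zero => exact ⟨0, le_rfl, by simp [maxBirkhoffSum_zero]⟩
  | succ N ih =>
    rcases (maxBirkhoffSum_nonneg (f := f) (ψ := ψ) (N + 1) x).eq_or_lt with h | h
    · exact ⟨0, N.zero_le.trans N.le_succ, by simp [← h]⟩
    · obtain ⟨n, hn, he⟩ := ih (f x)
      exact ⟨n + 1, by omega, by rw [maxBirkhoffSum_succ_of_pos h, he, birkhoffSum_succ']⟩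

theorem monotone_maxBirkhoffSum (x : X) : Monotone fun N => maxBirkhoffSum f ψ N x := by
  intro N N' hN
  obtain ⟨n, hn, he⟩ := exists_maxBirkhoffSum_eq_birkhoffSum (f := f) (ψ := ψ) N x
  show maxBirkhoffSum f ψ N x ≤ maxBirkhoffSum f ψ N' x
  exact he ▸ birkhoffSum_le_maxBirkhoffSum (hn.trans hN) x

theorem iUnion_maxBirkhoffSum_pos :
    ⋃ N, {x | 0 < maxBirkhoffSum f ψ N x} = {x | ∃ n, 0 < birkhoffSum f ψ n x} := by
  ext x
  simp only [Set.mem_iUnion, Set.mem_ofPred_eq]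
  constructor
  · rintro ⟨N, hN⟩
    obtain ⟨n, -, he⟩ := exists_maxBirkhoffSum_eq_birkhoffSum N x
    exact ⟨n, he ▸ hN⟩
  · rintro ⟨n, hn⟩
    exact ⟨n, hn.trans_le (birkhoffSum_le_maxBirkhoffSum le_rfl x)⟩

variable [MeasurableSpace X] {μ : Measure X}

theorem measurable_maxBirkhoffSum (hf : Measurable f) (hψ : Measurable ψ) (N : ℕ) :
    Measurable (maxBirkhoffSum f ψ N) := by
  induction N with
  | zero => exact measurable_const
  | succ N ih => exact measurable_const.max (hψ.add (ih.comp hf))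

theorem integrable_maxBirkhoffSum (hf : MeasurePreserving f μ μ)
    (hψ : Integrable ψ μ) (N : ℕ) : Integrable (maxBirkhoffSum f ψ N) μ := by
  induction N with
  | zero => exact integrable_zero _ _ _
  | succ N ih =>
    exact (hψ.add (hf.integrable_comp_of_integrable ih)).pos_part.congr
      (.of_forall fun _ => max_comm _ _)

/-- Hopf's maximal ergodic lemma. -/
theorem MeasureTheory.MeasurePreserving.setIntegral_setOf_exists_birkhoffSum_pos_nonneg
    (hf : MeasurePreserving f μ μ) (hψm : Measurable ψ) (hψ : Integrable ψ μ) :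
    0 ≤ ∫ x in {x | ∃ n, 0 < birkhoffSum f ψ n x}, ψ x ∂μ := by
  set M := maxBirkhoffSum f ψ
  have hM : ∀ N, Integrable (M N) μ := integrable_maxBirkhoffSum hf hψ
  have hMf : ∀ N, Integrable (fun x => M N (f x)) μ :=
    fun N => hf.integrable_comp_of_integrable (hM N)
  have hE : ∀ N, MeasurableSet {x | 0 < M N x} := fun N =>
    measurableSet_lt measurable_const (measurable_maxBirkhoffSum hf.measurable hψm N)
  -- On `{M (N + 1) > 0}` we have `ψ = M (N + 1) - M N ∘ f`, and `M (N + 1)` vanishes off it.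
  have key : ∀ N, 0 ≤ ∫ x in {x | 0 < M (N + 1) x}, ψ x ∂μ := fun N => calc
    0 ≤ ∫ x, M (N + 1) x ∂μ - ∫ x, M N x ∂μ :=
        sub_nonneg.2 <| integral_mono (hM N) (hM (N + 1)) fun x =>
          monotone_maxBirkhoffSum x N.le_succ
    _ = ∫ x, M (N + 1) x ∂μ - ∫ x, M N (f x) ∂μ := by
        rw [hf.integral_comp_of_aestronglyMeasurable (hM N).aestronglyMeasurable]
    _ ≤ ∫ x in {x | 0 < M (N + 1) x}, M (N + 1) x ∂μ
          - ∫ x in {x | 0 < M (N + 1) x}, M N (f x) ∂μ := by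
        refine sub_le_sub (setIntegral_eq_integral_of_forall_compl_eq_zero fun x hx =>
          (maxBirkhoffSum_nonneg _ x).antisymm' (not_lt.1 hx)).ge ?_
        exact setIntegral_le_integral (hMf N) (.of_forall fun x => maxBirkhoffSum_nonneg N (f x))
    _ = ∫ x in {x | 0 < M (N + 1) x}, ψ x ∂μ := by
        rw [← integral_sub (hM _).integrableOn (hMf N).integrableOn]
        refine setIntegral_congr_fun (hE _) fun x hx => ?_
        simp only [maxBirkhoffSum_succ_of_pos hx, M]
        ring
  have hmono : Monotone fun N => {x | 0 < M N x} := fun N N' hN x hx =>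
    hx.trans_le (monotone_maxBirkhoffSum x hN)
  have hlim := tendsto_setIntegral_of_monotone hE hmono hψ.integrableOn
  rw [iUnion_maxBirkhoffSum_pos] at hlim
  exact ge_of_tendsto ((tendsto_add_atTop_iff_nat 1).2 hlim) (.of_forall key)

end Hopf

section Ergodic

variable {X : Type*} {f : X → X}

theorem bddAbove_birkhoffSum_comp_iff {ψ : X → ℝ} (x : X) :
    BddAbove (Set.range fun n => birkhoffSum f ψ n (f x)) ↔
      BddAbove (Set.range fun n => birkhoffSum f ψ n x) := by
  simp only [bddAbove_def, Set.forall_mem_range]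
  constructor
  · rintro ⟨M, hM⟩
    refine ⟨max 0 (ψ x + M), fun n => ?_⟩
    cases n with
    | zero => simp
    | succ n => exact birkhoffSum_succ' f ψ n x ▸ le_max_of_le_right (by linarith [hM n])
  · rintro ⟨M, hM⟩
    refine ⟨M - ψ x, fun n => ?_⟩
    linarith [birkhoffSum_succ' f ψ n x ▸ hM (n + 1)]

variable [MeasurableSpace X] {μ : Measure X}

/-- By Hopf's lemma the invariant set where the Birkhoff sums are unbounded above cannot have
full measure, so by ergodicity it is null. -/
theorem Ergodic.ae_bddAbove_birkhoffSum (hf : Ergodic f μ) {ψ : X → ℝ}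
    (hψm : Measurable ψ) (hψ : Integrable ψ μ) (hneg : ∫ x, ψ x ∂μ < 0) :
    ∀ᵐ x ∂μ, BddAbove (Set.range fun n => birkhoffSum f ψ n x) := by
  set A := {x | BddAbove (Set.range fun n => birkhoffSum f ψ n x)}
  have hA : MeasurableSet A := measurableSet_bddAbove_range fun n =>
    Finset.measurable_sum _ fun i _ => hψm.comp (hf.measurable.iterate i)
  rcases hf.measure_self_or_compl_eq_zero hA (Set.ext bddAbove_birkhoffSum_comp_iff) with h | h
  · refine absurd (hf.toMeasurePreserving.setIntegral_setOf_exists_birkhoffSum_pos_nonneg hψm hψ)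
      (not_le.2 ?_)
    have hpos : ∀ᵐ x ∂μ, x ∈ {x | ∃ n, 0 < birkhoffSum f ψ n x} := by
      refine (measure_eq_zero_iff_ae_notMem.1 h).mono fun x hx => ?_
      obtain ⟨_, ⟨n, rfl⟩, hn⟩ := not_bddAbove_iff.1 hx 0
      exact ⟨n, hn⟩
    rwa [Measure.restrict_eq_self_of_ae_mem hpos]
  · exact ae_iff.2 h

theorem Ergodic.ae_eventually_birkhoffSum_le [IsProbabilityMeasure μ] (hf : Ergodic f μ)
    {φ : X → ℝ} (hφm : Measurable φ) (hφ : Integrable φ μ) {c : ℝ} (hc : ∫ x, φ x ∂μ < c) :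
    ∀ᵐ x ∂μ, ∀ᶠ n in atTop, birkhoffSum f φ n x ≤ c * n := by
  obtain ⟨c', hφc', hc'c⟩ := exists_between hc
  have hneg : ∫ x, (φ x - c') ∂μ < 0 := by
    rw [integral_sub hφ (integrable_const c'), integral_const]
    simpa using hφc'
  filter_upwards [hf.ae_bddAbove_birkhoffSum (hφm.sub_const c') (hφ.sub (integrable_const c'))
    hneg] with x ⟨M, hM⟩
  have hgrowth : Tendsto (fun n : ℕ => (c - c') * n) atTop atTop :=
    tendsto_natCast_atTop_atTop.const_mul_atTop (sub_pos.2 hc'c)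
  filter_upwards [hgrowth.eventually_ge_atTop M] with n hn
  have hsum : birkhoffSum f (fun x => φ x - c') n x = birkhoffSum f φ n x - n * c' := by
    simp [birkhoffSum, Finset.sum_sub_distrib]
  have hMn : birkhoffSum f (fun x => φ x - c') n x ≤ M := hM ⟨n, rfl⟩
  linarith

theorem Ergodic.ae_isLittleO_birkhoffSum [IsProbabilityMeasure μ] (hf : Ergodic f μ)
    {φ : X → ℝ} (hφ : Integrable φ μ) (hmean : ∫ x, φ x ∂μ = 0) :
    ∀ᵐ x ∂μ, (fun n => birkhoffSum f φ n x) =o[atTop] (fun n => (n : ℝ)) := by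
  set φ' := hφ.1.mk φ
  have hφ'm : Measurable φ' := hφ.1.stronglyMeasurable_mk.measurable
  have hae : φ =ᵐ[μ] φ' := hφ.1.ae_eq_mk
  have hφ' : Integrable φ' μ := hφ.congr hae
  have hmean' : ∫ x, φ' x ∂μ = 0 := integral_congr_ae hae ▸ hmean
  have hbound : ∀ k : ℕ, ∀ᵐ x ∂μ, ∀ᶠ n in atTop, |birkhoffSum f φ' n x| ≤ 1 / (k + 1) * n := by
    intro k
    have hk : (0 : ℝ) < 1 / (k + 1) := by positivity
    filter_upwards [hf.ae_eventually_birkhoffSum_le hφ'm hφ' (hmean' ▸ hk),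
      hf.ae_eventually_birkhoffSum_le hφ'm.neg hφ'.neg (c := 1 / (k + 1))
        (by simpa only [Pi.neg_apply, integral_neg, hmean', neg_zero] using hk)]
      with x h₁ h₂
    filter_upwards [h₁, h₂] with n hn₁ hn₂
    rw [birkhoffSum_neg] at hn₂
    exact abs_le.2 ⟨by linarith, hn₁⟩
  have hsame : ∀ᵐ x ∂μ, ∀ n, birkhoffSum f φ n x = birkhoffSum f φ' n x := ae_all_iff.2 fun n =>
    hf.toMeasurePreserving.quasiMeasurePreserving.birkhoffSum_ae_eq_of_ae_eq hae n
  filter_upwards [ae_all_iff.2 hbound, hsame] with x hx hxs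
  refine Asymptotics.isLittleO_iff.2 fun c hc => ?_
  obtain ⟨k, hk⟩ := exists_nat_one_div_lt hc
  filter_upwards [hx k] with n hn
  rw [hxs, Real.norm_eq_abs, Real.norm_natCast]
  exact hn.trans (by gcongr)

end Ergodic

section Counting

theorem card_le_of_pairwise_le_abs_sub {ι : Type*} {F : Finset ι} {u : ι → ℝ} {ε M : ℝ}
    (hε : 0 < ε) (hM : 0 ≤ M) (hbound : ∀ i ∈ F, |u i| ≤ M)
    (hsep : (F : Set ι).Pairwise fun i j => ε ≤ |u i - u j|) :
    (#F : ℝ) ≤ 2 * M / ε + 2 := by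
  have hmaps : Set.MapsTo (fun i => ⌊u i / ε⌋) F (Icc ⌊-M / ε⌋ ⌊M / ε⌋) := fun i hi => by
    obtain ⟨h₁, h₂⟩ := abs_le.1 (hbound i hi)
    exact mem_Icc.2 ⟨Int.floor_mono (by gcongr), Int.floor_mono (by gcongr)⟩
  have hinj : (F : Set ι).InjOn fun i => ⌊u i / ε⌋ := fun i hi j hj hij => by
    by_contra hne
    have := Int.abs_sub_lt_one_of_floor_eq_floor hij
    rw [← sub_div, abs_div, abs_of_pos hε, div_lt_one hε] at this
    exact (hsep hi hj hne).not_gt this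
  have hcard := card_le_card_of_injOn _ hmaps hinj
  rw [Int.card_Icc] at hcard
  have h₁ := Int.floor_le (M / ε)
  have h₂ := Int.sub_one_lt_floor (-M / ε)
  calc (#F : ℝ) ≤ ((⌊M / ε⌋ + 1 - ⌊-M / ε⌋).toNat : ℤ) := by exact_mod_cast hcard
    _ = max ((⌊M / ε⌋ : ℝ) + 1 - ⌊-M / ε⌋) 0 := by rw [Int.toNat_eq_max]; push_cast; rfl
    _ ≤ 2 * M / ε + 2 := max_le (by linarith [show 2 * M / ε = M / ε - -M / ε by ring])
        (by positivity)

theorem isLittleO_card_filter_of_le_abs_sub {u : ℕ → ℝ} {p : ℕ → Prop} [DecidablePred p]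
    {ε : ℝ} (hε : 0 < ε) (hu : u =o[atTop] (fun n => (n : ℝ)))
    (hsep : ∀ k m, k < m → p k → p m → ε ≤ |u m - u k|) :
    (fun N => (#{n ∈ range N | p n} : ℝ)) =o[atTop] (fun N => (N : ℝ)) := by
  refine Asymptotics.isLittleO_iff.2 fun c hc => ?_
  obtain ⟨N₀, hN₀⟩ := eventually_atTop.1 (Asymptotics.isLittleO_iff.1 hu (c := c * ε / 4)
    (by positivity))
  -- Beyond `N₀` the values `u n`, `n < N`, lie in `[-c ε N / 4, c ε N / 4]`.
  have hcount : ∀ N : ℕ, (#{n ∈ range N | p n} : ℝ) ≤ N₀ + (c * N / 2 + 2) := by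
    intro N
    have hsplit : #{n ∈ range N | p n} ≤ N₀ + #{n ∈ range N | N₀ ≤ n ∧ p n} := by
      refine (card_le_card fun n hn => ?_).trans
        (card_range N₀ ▸ card_union_le (range N₀) {n ∈ range N | N₀ ≤ n ∧ p n})
      simp only [mem_union, mem_range, mem_filter] at hn ⊢
      rcases lt_or_ge n N₀ with h | h
      exacts [.inl h, .inr ⟨hn.1, h, hn.2⟩]
    have hlate : (#{n ∈ range N | N₀ ≤ n ∧ p n} : ℝ) ≤ 2 * (c * ε / 4 * N) / ε + 2 := by
      refine card_le_of_pairwise_le_abs_sub (u := u) hε (by positivity) (fun n hn => ?_)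
        fun k hk m hm hkm => ?_
      · simp only [mem_filter, mem_range] at hn
        have := hN₀ n hn.2.1
        rw [Real.norm_eq_abs, Real.norm_natCast] at this
        exact this.trans (by gcongr; exact hn.1.le)
      · simp only [coe_filter, mem_range, Set.mem_ofPred_eq] at hk hm
        rcases hkm.lt_or_gt with h | h
        · exact abs_sub_comm (u k) (u m) ▸ hsep k m h hk.2.2 hm.2.2
        · exact hsep m k h hm.2.2 hk.2.2
    have hscale : 2 * (c * ε / 4 * N) / ε = c * N / 2 := by field_simp; ring
    have hsplit' : (#{n ∈ range N | p n} : ℝ) ≤ N₀ + #{n ∈ range N | N₀ ≤ n ∧ p n} := by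
      exact_mod_cast hsplit
    linarith
  have hgrowth : Tendsto (fun N : ℕ => c / 2 * N) atTop atTop :=
    tendsto_natCast_atTop_atTop.const_mul_atTop (by positivity)
  filter_upwards [hgrowth.eventually_ge_atTop (N₀ + 2)] with N hN
  rw [Real.norm_natCast, Real.norm_natCast]
  linarith [hcount N]

end Counting

section Recurrence

variable {X : Type*} {f : X → X} {E : Set X}

open scoped Classical in
theorem birkhoffAverage_indicator_one (N : ℕ) (x : X) :
    birkhoffAverage ℝ f (E.indicator (1 : X → ℝ)) N x = #{n ∈ range N | f^[n] x ∈ E} / N := by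
  simp [birkhoffAverage, birkhoffSum, Set.indicator_apply, div_eq_inv_mul]

variable [MeasurableSpace X] {μ : Measure X}

theorem MeasureTheory.MeasurePreserving.measure_eq_zero_of_ae_tendsto_birkhoffAverage
    [IsFiniteMeasure μ] (hf : MeasurePreserving f μ μ) (hE : MeasurableSet E)
    (h : ∀ᵐ x ∂μ,
      Tendsto (fun N => birkhoffAverage ℝ f (E.indicator (1 : X → ℝ)) N x) atTop (𝓝 0)) :
    μ E = 0 := by
  classical
  have hint : Integrable (E.indicator (1 : X → ℝ)) μ := (integrable_const (1 : ℝ)).indicator hE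
  have hbound : ∀ N x, ‖birkhoffAverage ℝ f (E.indicator (1 : X → ℝ)) N x‖ ≤ 1 := fun N x => by
    rw [birkhoffAverage_indicator_one, Real.norm_eq_abs, abs_div, Nat.abs_cast, Nat.abs_cast]
    exact div_le_one_of_le₀ (by exact_mod_cast (card_filter_le _ _).trans (card_range N).le)
      N.cast_nonneg
  have hlim := tendsto_integral_of_dominated_convergence
    (F := fun N => birkhoffAverage ℝ f (E.indicator (1 : X → ℝ)) N) (fun _ => 1)
    (fun N => ((integrable_birkhoffSum hf hint N).smul (N : ℝ)⁻¹).aestronglyMeasurable)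
    (integrable_const 1) (fun N => .of_forall (hbound N)) h
  have hconst : ∀ᶠ N in atTop,
      ∫ x, birkhoffAverage ℝ f (E.indicator (1 : X → ℝ)) N x ∂μ = μ.real E :=
    eventually_atTop.2 ⟨1, fun N hN => by
      rw [integral_birkhoffAverage hf hint (by omega), integral_indicator_one hE]⟩
  rw [integral_zero, tendsto_congr' hconst] at hlim
  exact (measureReal_eq_zero_iff (measure_ne_top μ E)).1
    (tendsto_nhds_unique tendsto_const_nhds hlim)

theorem Ergodic.measure_eq_zero_of_forall_le_abs_birkhoffSum [IsProbabilityMeasure μ]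
    (hf : Ergodic f μ) {φ : X → ℝ} (hφ : Integrable φ μ) (hmean : ∫ x, φ x ∂μ = 0)
    (hE : MeasurableSet E) {ε : ℝ} (hε : 0 < ε)
    (hret : ∀ x ∈ E, ∀ n, 1 ≤ n → f^[n] x ∈ E → ε ≤ |birkhoffSum f φ n x|) :
    μ E = 0 := by
  classical
  refine hf.toMeasurePreserving.measure_eq_zero_of_ae_tendsto_birkhoffAverage hE ?_
  filter_upwards [hf.ae_isLittleO_birkhoffSum hφ hmean] with x hx
  simp_rw [birkhoffAverage_indicator_one]
  refine (isLittleO_card_filter_of_le_abs_sub hε hx fun k m hkm hk hm => ?_).tendsto_div_nhds_zero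
  obtain ⟨d, rfl⟩ := Nat.exists_eq_add_of_le hkm.le
  rw [birkhoffSum_add, add_sub_cancel_left]
  exact hret _ hk d (by omega) (by rwa [← Function.iterate_add_apply, add_comm])

end Recurrence

theorem stmt4_general {X : Type*} [MeasurableSpace X] (μ : Measure X)
    [IsProbabilityMeasure μ] (T : X ≃ X)
    (hErg : Ergodic ⇑T μ)
    (φ : X → ℝ) (hφ : Integrable φ μ) (hmean : ∫ x, φ x ∂μ = 0)
    (B : Set X) (hB : MeasurableSet B) (ε : ℝ) (hε : 0 < ε) :
    μ (⋃ n : ℕ, ⋃ _ : 1 ≤ n,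
        (B ∩ (⇑T)^[n] ⁻¹' B ∩ {x | |∑ i ∈ Finset.range n, φ ((⇑T)^[i] x)| < ε})) = μ B := by
  set U := ⋃ n : ℕ, ⋃ _ : 1 ≤ n,
    (B ∩ (⇑T)^[n] ⁻¹' B ∩ {x | |∑ i ∈ Finset.range n, φ ((⇑T)^[i] x)| < ε})
  have hmp := hErg.toMeasurePreserving
  have hU : NullMeasurableSet U μ := .iUnion fun n => .iUnion fun _ =>
    ((hB.inter (hmp.measurable.iterate n hB)).nullMeasurableSet).inter
      (nullMeasurableSet_lt (integrable_birkhoffSum hmp hφ n).abs.aemeasurable aemeasurable_const)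
  have hUB : U ⊆ B :=
    Set.iUnion₂_subset fun _ _ => Set.inter_subset_left.trans Set.inter_subset_left
  -- `B \ U` is only null-measurable: run the argument on a measurable subset of full measure.
  obtain ⟨E, hEU, hE, hEae⟩ := (hB.nullMeasurableSet.diff hU).exists_measurable_subset_ae_eq
  have hE0 : μ E = 0 := hErg.measure_eq_zero_of_forall_le_abs_birkhoffSum hφ hmean hE hε
    fun x hx n hn hnx => not_lt.1 fun hlt =>
      (hEU hx).2 (Set.mem_iUnion₂.2 ⟨n, hn, ⟨(hEU hx).1, (hEU hnx).1⟩, hlt⟩)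
  exact measure_eq_measure_of_null_sdiff hUB (measure_congr hEae ▸ hE0)

/-- Atkinson's lemma. -/
theorem stmt4 {X : Type*} [MeasurableSpace X] (μ : Measure X)
    [IsProbabilityMeasure μ] (T : X ≃ X) (hTs : Measurable ⇑T.symm)
    (hErg : Ergodic ⇑T μ)
    (φ : X → ℝ) (hφ : Integrable φ μ) (hmean : ∫ x, φ x ∂μ = 0)
    (B : Set X) (hB : MeasurableSet B) (ε : ℝ) (hε : 0 < ε) :
    μ (⋃ n : ℕ, ⋃ _ : 1 ≤ n,
        (B ∩ (⇑T)^[n] ⁻¹' B ∩ {x | |∑ i ∈ Finset.range n, φ ((⇑T)^[i] x)| < ε})) = μ B :=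
  stmt4_general μ T hErg φ hφ hmean B hB ε hε
end
end

section
/- Let f : ℝ² → ℝ² be a lift of a torus homeomorphism homotopic to the identity, let A ∈ SL(2, ℤ), and let h : ℝ² → ℝ² be a lift of a torus homeomorphism isotopic to the linear torus automorphism induced by A (so h(x + u) = h(x) + A u for all u ∈ ℤ²). Then the rotation set satisfies ρ(h ∘ f ∘ h^{−1}) = A · ρ(f). In particular ρ(A f A^{−1}) = A ρ(f). -/
open Filter Topology MeasureTheory

noncomputable section

/-- The linear action of an integer matrix on ℝ². -/
def matAct (A : Matrix (Fin 2) (Fin 2) ℤ) (z : V2) : V2 :=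
  ((A 0 0 : ℝ) * z.1 + (A 0 1 : ℝ) * z.2, (A 1 0 : ℝ) * z.1 + (A 1 1 : ℝ) * z.2)

lemma matAct_sub (M : Matrix (Fin 2) (Fin 2) ℤ) (a b : V2) :
    matAct M (a - b) = matAct M a - matAct M b := by
  simp [matAct, Prod.ext_iff]; constructor <;> ring

lemma matAct_smul (M : Matrix (Fin 2) (Fin 2) ℤ) (c : ℝ) (z : V2) :
    matAct M (c • z) = c • matAct M z := by
  simp [matAct, Prod.ext_iff, Prod.smul_def, smul_eq_mul]; constructor <;> ring

lemma matAct_cont (M : Matrix (Fin 2) (Fin 2) ℤ) : Continuous (matAct M) := by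
  unfold matAct; fun_prop

lemma matAct_mul (M N : Matrix (Fin 2) (Fin 2) ℤ) (z : V2) :
    matAct (M * N) z = matAct M (matAct N z) := by
  simp [matAct, Matrix.mul_apply, Fin.sum_univ_two, Prod.ext_iff]
  constructor <;> ring

lemma matAct_one (z : V2) : matAct 1 z = z := by
  simp [matAct, Matrix.one_apply]

lemma iter_conj (f H Hinv : V2 → V2) (hinvH : ∀ z, Hinv (H z) = z) (n : ℕ) (x : V2) :
    (H ∘ f ∘ Hinv)^[n] (H x) = H (f^[n] x) := by
  induction n with
  | zero => simp
  | succ n ih =>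
      rw [Function.iterate_succ_apply', ih, Function.iterate_succ_apply']
      simp [hinvH]

lemma smul_bdd_tendsto (n : ℕ → ℕ) (hn : Tendsto n atTop atTop) (u : ℕ → V2) (D : ℝ)
    (hu : ∀ i, ‖u i‖ ≤ D) :
    Tendsto (fun i => ((n i : ℝ))⁻¹ • u i) atTop (𝓝 0) := by
  have hninv : Tendsto (fun i => ((n i : ℝ))⁻¹) atTop (𝓝 0) :=
    (tendsto_natCast_atTop_atTop.comp hn).inv_tendsto_atTop
  have hb : Tendsto (fun i => ((n i : ℝ))⁻¹ * D) atTop (𝓝 0) := by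
    simpa using hninv.mul_const D
  refine squeeze_zero_norm (fun i => ?_) hb
  rw [norm_smul, norm_inv, Real.norm_natCast]
  exact mul_le_mul_of_nonneg_left (hu i) (by positivity)

/-- Key identity. -/
lemma conj_identity (f H : V2 → V2) (A : Matrix (Fin 2) (Fin 2) ℤ) (c : ℝ) (F Y : V2) :
    c • (H F - H Y) =
      matAct A (c • (F - Y)) +
        c • ((H F - matAct A F) - (H Y - matAct A Y)) := by
  rw [matAct_smul, matAct_sub, ← smul_add]
  congr 1
  abel

lemma rot_conj (f H Hinv : V2 → V2) (hHinv : ∀ z, H (Hinv z) = z)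
    (hinvH : ∀ z, Hinv (H z) = z)
    (A B : Matrix (Fin 2) (Fin 2) ℤ)
    (hBA : ∀ z, matAct B (matAct A z) = z)
    (hAB : ∀ z, matAct A (matAct B z) = z)
    (C : ℝ) (hC : ∀ z, ‖H z - matAct A z‖ ≤ C) :
    RotSet (H ∘ f ∘ Hinv) = matAct A '' RotSet f := by
  have iterx : ∀ (n : ℕ) (x : V2), (H ∘ f ∘ Hinv)^[n] x = H (f^[n] (Hinv x)) := by
    intro n x
    conv_lhs => rw [← hHinv x]
    exact iter_conj f H Hinv hinvH n (Hinv x)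
  ext v
  constructor
  · rintro ⟨n, x, hn, hv⟩
    let y : ℕ → V2 := fun i => Hinv (x i)
    have key : ∀ i, ((n i : ℝ))⁻¹ • ((H ∘ f ∘ Hinv)^[n i] (x i) - x i) =
        matAct A (((n i : ℝ))⁻¹ • (f^[n i] (y i) - y i)) +
          ((n i : ℝ))⁻¹ • ((H (f^[n i] (y i)) - matAct A (f^[n i] (y i))) -
            (H (y i) - matAct A (y i))) := by
      intro i
      rw [iterx]
      show ((n i : ℝ))⁻¹ • (H (f^[n i] (y i)) - x i) = _
      rw [show (H (f^[n i] (y i)) - x i) = (H (f^[n i] (y i)) - H (y i)) by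
        rw [show H (y i) = x i from hHinv (x i)]]
      exact conj_identity f H A _ _ _
    have hE : Tendsto (fun i => ((n i : ℝ))⁻¹ •
        ((H (f^[n i] (y i)) - matAct A (f^[n i] (y i))) - (H (y i) - matAct A (y i))))
        atTop (𝓝 0) := by
      refine smul_bdd_tendsto n hn _ (C + C) fun i => ?_
      exact (norm_sub_le _ _).trans (add_le_add (hC _) (hC _))
    have hq : Tendsto (fun i => matAct A (((n i : ℝ))⁻¹ • (f^[n i] (y i) - y i)))
        atTop (𝓝 v) := by
      have := hv.sub hE
      simp only [sub_zero] at this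
      refine this.congr fun i => ?_
      rw [key i]; abel
    have hq' : Tendsto (fun i => ((n i : ℝ))⁻¹ • (f^[n i] (y i) - y i))
        atTop (𝓝 (matAct B v)) := by
      have h2 := ((matAct_cont B).tendsto v).comp hq
      refine h2.congr fun i => ?_
      simp [hBA]
    exact ⟨matAct B v, ⟨n, y, hn, hq'⟩, hAB v⟩
  · rintro ⟨w, ⟨n, x, hn, hw⟩, rfl⟩
    refine ⟨n, fun i => H (x i), hn, ?_⟩
    have key : ∀ i, ((n i : ℝ))⁻¹ • ((H ∘ f ∘ Hinv)^[n i] (H (x i)) - H (x i)) =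
        matAct A (((n i : ℝ))⁻¹ • (f^[n i] (x i) - x i)) +
          ((n i : ℝ))⁻¹ • ((H (f^[n i] (x i)) - matAct A (f^[n i] (x i))) -
            (H (x i) - matAct A (x i))) := by
      intro i
      rw [iter_conj f H Hinv hinvH]
      exact conj_identity f H A _ _ _
    have hE : Tendsto (fun i => ((n i : ℝ))⁻¹ •
        ((H (f^[n i] (x i)) - matAct A (f^[n i] (x i))) - (H (x i) - matAct A (x i))))
        atTop (𝓝 0) := by
      refine smul_bdd_tendsto n hn _ (C + C) fun i => ?_
      exact (norm_sub_le _ _).trans (add_le_add (hC _) (hC _))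
    have h1 : Tendsto (fun i => matAct A (((n i : ℝ))⁻¹ • (f^[n i] (x i) - x i)))
        atTop (𝓝 (matAct A w)) := ((matAct_cont A).tendsto w).comp hw
    have := h1.add hE
    simp only [add_zero] at this
    exact this.congr fun i => (key i).symm

lemma bound_of_lift (h : V2 → V2) (hh : Continuous h) (A : Matrix (Fin 2) (Fin 2) ℤ)
    (hlh : ∀ (z : V2) (u : ℤ × ℤ), h (z + intVec u) = h z + matAct A (intVec u)) :
    ∃ C, ∀ z, ‖h z - matAct A z‖ ≤ C := by
  set g : V2 → V2 := fun z => h z - matAct A z with hg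
  have hgc : Continuous g := by
    have : Continuous (matAct A) := matAct_cont A
    fun_prop
  have hper : ∀ (z : V2) (u : ℤ × ℤ), g (z + intVec u) = g z := by
    intro z u
    simp only [hg, hlh z u]
    have : matAct A (z + intVec u) = matAct A z + matAct A (intVec u) := by
      simp [matAct, Prod.ext_iff]; constructor <;> ring
    rw [this]; abel
  obtain ⟨C, hCb⟩ := (isCompact_Icc (a := ((0 : ℝ), (0 : ℝ))) (b := (1, 1))).exists_bound_of_continuousOn
    hgc.continuousOn
  refine ⟨C, fun z => ?_⟩
  set u : ℤ × ℤ := (⌊z.1⌋, ⌊z.2⌋) with hu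
  have hmem : z - intVec u ∈ Set.Icc ((0 : ℝ), (0 : ℝ)) (1, 1) := by
    simp only [Set.mem_Icc, Prod.le_def, Prod.fst_sub, Prod.snd_sub, hu, intVec]
    refine ⟨⟨?_, ?_⟩, ?_, ?_⟩
    · exact sub_nonneg.2 (Int.floor_le z.1)
    · exact sub_nonneg.2 (Int.floor_le z.2)
    · have := Int.lt_floor_add_one z.1; linarith
    · have := Int.lt_floor_add_one z.2; linarith
  have : g z = g (z - intVec u) := by
    conv_lhs => rw [show z = (z - intVec u) + intVec u by abel]
    exact hper _ u
  rw [show h z - matAct A z = g z from rfl, this]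
  exact hCb _ hmem

/-- Conjugation: if h is a lift of a homeomorphism isotopic to the automorphism induced by
A ∈ SL(2,ℤ), then ρ(h f h⁻¹) = A ρ(f); in particular ρ(A f A⁻¹) = A ρ(f). -/
theorem stmt7 (f : Equiv.Perm V2) (hf : Continuous ⇑f) (hf' : Continuous ⇑f.symm)
    (hlift : IsLift ⇑f)
    (A : Matrix.SpecialLinearGroup (Fin 2) ℤ)
    (h : Equiv.Perm V2) (hh : Continuous ⇑h) (hh' : Continuous ⇑h.symm)
    (hlh : ∀ (z : V2) (u : ℤ × ℤ), h (z + intVec u) = h z + matAct (↑A) (intVec u)) :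
    RotSet (⇑h ∘ ⇑f ∘ ⇑h.symm) = matAct (↑A) '' RotSet ⇑f ∧
    RotSet (matAct (↑A) ∘ ⇑f ∘ matAct (↑(A⁻¹))) = matAct (↑A) '' RotSet ⇑f := by
  obtain ⟨C, hC⟩ := bound_of_lift ⇑h hh (↑A) hlh
  have h1 : ((A⁻¹ : Matrix.SpecialLinearGroup (Fin 2) ℤ) : Matrix (Fin 2) (Fin 2) ℤ) * (A : Matrix (Fin 2) (Fin 2) ℤ) = 1 := by
    rw [← Matrix.SpecialLinearGroup.coe_mul, inv_mul_cancel]; simp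
  have h2 : ((A : Matrix.SpecialLinearGroup (Fin 2) ℤ) : Matrix (Fin 2) (Fin 2) ℤ) * ((A⁻¹ : Matrix.SpecialLinearGroup (Fin 2) ℤ) : Matrix (Fin 2) (Fin 2) ℤ) = 1 := by
    rw [← Matrix.SpecialLinearGroup.coe_mul, mul_inv_cancel]; simp
  have hBA : ∀ z, matAct (↑(A⁻¹)) (matAct (↑A) z) = z := fun z => by
    rw [← matAct_mul, h1, matAct_one]
  have hAB : ∀ z, matAct (↑A) (matAct (↑(A⁻¹)) z) = z := fun z => by
    rw [← matAct_mul, h2, matAct_one]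
  constructor
  · exact rot_conj ⇑f ⇑h ⇑h.symm h.apply_symm_apply h.symm_apply_apply (↑A) (↑(A⁻¹)) hBA hAB C hC
  · exact rot_conj ⇑f (matAct ↑A) (matAct ↑(A⁻¹)) hAB hBA (↑A) (↑(A⁻¹)) hBA hAB 0
      (fun z => by simp)
end
end
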